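/- arXiv:2506.18909 — 2 statements merged into one kernel-verified Lean document; each statement's English description precedes it below -/
import Mathlib

section
/- Let X be a complex Banach space, n ≥ 1, and let f : [0,∞)^n → X be locally Bochner integrable. If λ⁰ = (λ₁⁰,…,λₙ⁰) ∈ Ω_abs(f), then there exists a finite real constant M > 0 such that for all (t₁,…,tₙ) ∈ [0,∞)^n one has ∫₀^{t₁}…∫₀^{tₙ} ‖f(s₁,…,sₙ)‖ ds₁…dsₙ ≤ M · exp( max(0, Re λ₁⁰)·t₁ + … + max(0, Re λₙ⁰)·tₙ ). -/
open MeasureTheory Set Filter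

noncomputable section

/-- The nonnegative orthant `[0,∞)^n`. -/
def orthant (n : ℕ) : Set (Fin n → ℝ) := {t | ∀ j, 0 ≤ t j}

/-- The box `[0,t₁] × … × [0,tₙ]`. -/
def box {n : ℕ} (t : Fin n → ℝ) : Set (Fin n → ℝ) := Set.univ.pi fun j => Set.Icc 0 (t j)

variable {X : Type*} [NormedAddCommGroup X] [NormedSpace ℂ X]

/-- The Laplace kernel `t ↦ e^{-λ₁t₁-…-λₙtₙ} f(t)`. -/
def lapKer {n : ℕ} (lam : Fin n → ℂ) (f : (Fin n → ℝ) → X) : (Fin n → ℝ) → X :=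
  fun t => Complex.exp (-(∑ j, lam j * (t j : ℂ))) • f t

/-- Absolute convergence of the Laplace integral at `lam`: membership in `Ω_abs(f)`. -/
def OmegaAbs {n : ℕ} (f : (Fin n → ℝ) → X) (lam : Fin n → ℂ) : Prop :=
  IntegrableOn (lapKer lam f) (orthant n)

/-- The (absolutely convergent) Laplace transform `(Lf)(λ)`. -/
def lapTr {n : ℕ} (f : (Fin n → ℝ) → X) (lam : Fin n → ℂ) : X :=
  ∫ t in orthant n, lapKer lam f t

/-- The truncated Laplace integral `I(f,λ,t)`. -/
def truncInt {n : ℕ} (f : (Fin n → ℝ) → X) (lam : Fin n → ℂ) (t : Fin n → ℝ) : X :=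
  ∫ s in box t, lapKer lam f s

/-- Convergence of the Laplace integral at `lam` with value `F`. -/
def LapConvTo {n : ℕ} (f : (Fin n → ℝ) → X) (lam : Fin n → ℂ) (F : X) : Prop :=
  ∀ ε > 0, ∃ M > 0, ∀ t : Fin n → ℝ, (∀ j, M < t j) → ‖truncInt f lam t - F‖ < ε

/-- Convergence of the Laplace integral at `lam`: membership in `Ω(f)`. -/
def OmegaConv {n : ℕ} (f : (Fin n → ℝ) → X) (lam : Fin n → ℂ) : Prop :=
  ∃ F, LapConvTo f lam F

/-- Boundedness of all truncated Laplace integrals: membership in `Ω_b(f)`. -/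
def OmegaBdd {n : ℕ} (f : (Fin n → ℝ) → X) (lam : Fin n → ℂ) : Prop :=
  ∃ C, ∀ t : Fin n → ℝ, ‖truncInt f lam t‖ ≤ C

/-- Local Bochner integrability on `[0,∞)^n`. -/
def LocInt {n : ℕ} (f : (Fin n → ℝ) → X) : Prop :=
  ∀ t : Fin n → ℝ, IntegrableOn f (box t)

/-!
On the box `[0,t]` the weight `e^{Re λ⁰·s}` is at most `e^{∑ max(0, Re λⱼ⁰) tⱼ}`, so
`‖f‖ ≤ e^{∑ max(0, Re λⱼ⁰) tⱼ} ‖e^{-λ⁰·s} f(s)‖` there; integrating over the box and enlarging it to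
the whole orthant bounds the antiderivative of `‖f‖` by that exponential times the finite constant
`∫_{[0,∞)^n} ‖e^{-λ⁰·s} f(s)‖ ds`.
-/

section

variable {n : ℕ}

theorem measurableSet_orthant : MeasurableSet (orthant n) := by
  have : orthant n = Set.univ.pi fun _ : Fin n => Set.Ici (0 : ℝ) := by
    ext s
    simp [orthant, Pi.le_def]
  rw [this]
  exact MeasurableSet.univ_pi fun _ => measurableSet_Ici

theorem measurableSet_box (t : Fin n → ℝ) : MeasurableSet (box t) :=
  MeasurableSet.univ_pi fun _ => measurableSet_Icc

theorem box_subset_orthant (t : Fin n → ℝ) : box t ⊆ orthant n :=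
  fun _ hs j => (hs j (mem_univ j)).1

theorem norm_lapKer (lam : Fin n → ℂ) (f : (Fin n → ℝ) → X) (s : Fin n → ℝ) :
    ‖lapKer lam f s‖ = Real.exp (-∑ j, (lam j).re * s j) * ‖f s‖ := by
  simp [lapKer, norm_smul, Complex.norm_exp, Complex.re_sum]

theorem sum_re_mul_le_of_mem_box (lam : Fin n → ℂ) {s t : Fin n → ℝ} (hs : s ∈ box t) :
    ∑ j, (lam j).re * s j ≤ ∑ j, max 0 (lam j).re * t j := by
  refine Finset.sum_le_sum fun j _ => ?_
  obtain ⟨hs0, hst⟩ := hs j (mem_univ j)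
  calc (lam j).re * s j ≤ max 0 (lam j).re * s j := by gcongr; exact le_max_right _ _
    _ ≤ max 0 (lam j).re * t j := by gcongr

theorem norm_le_exp_mul_norm_lapKer_of_mem_box (lam : Fin n → ℂ) (f : (Fin n → ℝ) → X)
    {s t : Fin n → ℝ} (hs : s ∈ box t) :
    ‖f s‖ ≤ Real.exp (∑ j, max 0 (lam j).re * t j) * ‖lapKer lam f s‖ := by
  have hf : ‖f s‖ = Real.exp (∑ j, (lam j).re * s j) * ‖lapKer lam f s‖ := by
    rw [norm_lapKer, ← mul_assoc, ← Real.exp_add, add_neg_cancel, Real.exp_zero, one_mul]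
  rw [hf]
  exact mul_le_mul_of_nonneg_right (Real.exp_le_exp.2 (sum_re_mul_le_of_mem_box lam hs))
    (norm_nonneg _)

theorem setIntegral_norm_box_le_of_omegaAbs {f : (Fin n → ℝ) → X} {lam : Fin n → ℂ}
    (hlam : OmegaAbs f lam) (t : Fin n → ℝ) :
    ∫ s in box t, ‖f s‖ ≤
      Real.exp (∑ j, max 0 (lam j).re * t j) * ∫ s in orthant n, ‖lapKer lam f s‖ := by
  set E := Real.exp (∑ j, max 0 (lam j).re * t j)
  have hbox : IntegrableOn (lapKer lam f) (box t) := hlam.mono_set (box_subset_orthant t)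
  calc ∫ s in box t, ‖f s‖ ≤ ∫ s in box t, E * ‖lapKer lam f s‖ :=
        integral_mono_of_nonneg (ae_of_all _ fun _ => norm_nonneg _) (hbox.norm.const_mul E)
          (ae_restrict_of_forall_mem (measurableSet_box t)
            fun _ hs => norm_le_exp_mul_norm_lapKer_of_mem_box lam f hs)
    _ = E * ∫ s in box t, ‖lapKer lam f s‖ := integral_const_mul E _
    _ ≤ E * ∫ s in orthant n, ‖lapKer lam f s‖ := by
        refine mul_le_mul_of_nonneg_left ?_ (Real.exp_pos _).le
        exact setIntegral_mono_set hlam.norm (ae_of_all _ fun _ => norm_nonneg _)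
          (box_subset_orthant t).eventuallyLE

end

theorem antiderivative_exponential_bound_general
    (n : ℕ) (f : (Fin n → ℝ) → X)
    (lam0 : Fin n → ℂ) (h0 : OmegaAbs f lam0) :
    ∃ M > 0, ∀ t ∈ orthant n,
      (∫ s in box t, ‖f s‖) ≤ M * Real.exp (∑ j, max 0 ((lam0 j).re) * t j) := by
  set C := ∫ s in orthant n, ‖lapKer lam0 f s‖
  have hC : 0 ≤ C := setIntegral_nonneg measurableSet_orthant fun _ _ => norm_nonneg _
  refine ⟨C + 1, by linarith, fun t _ => ?_⟩
  calc ∫ s in box t, ‖f s‖ ≤ Real.exp (∑ j, max 0 (lam0 j).re * t j) * C :=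
        setIntegral_norm_box_le_of_omegaAbs h0 t
    _ ≤ (C + 1) * Real.exp (∑ j, max 0 (lam0 j).re * t j) := by
        rw [mul_comm]
        gcongr
        linarith

/-- If `λ⁰ ∈ Ω_abs(f)`, then the antiderivative of `‖f‖` grows at most like
`M · exp(max(0,Re λ₁⁰)t₁ + … + max(0,Re λₙ⁰)tₙ)`. -/
theorem antiderivative_exponential_bound [CompleteSpace X]
    (n : ℕ) (hn : 1 ≤ n) (f : (Fin n → ℝ) → X) (hf : LocInt f)
    (lam0 : Fin n → ℂ) (h0 : OmegaAbs f lam0) :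
    ∃ M > 0, ∀ t ∈ orthant n,
      (∫ s in box t, ‖f s‖) ≤ M * Real.exp (∑ j, max 0 ((lam0 j).re) * t j) :=
  antiderivative_exponential_bound_general n f lam0 h0
end
end

section
/- Let X be a complex Banach space, n ≥ 1 and 0 < αⱼ ≤ π for all j ∈ {1,…,n}. Let f : Σ_{α₁} × … × Σ_{αₙ} → X be holomorphic and suppose that for all βⱼ ∈ (0,αⱼ) (j = 1,…,n) the set {f(z₁,…,zₙ) : zⱼ ∈ Σ_{βⱼ} for all j} is bounded in X. Fix βⱼ ∈ (0,αⱼ) for each j and x ∈ X. Then f(t₁,…,tₙ) → x as (t₁,…,tₙ) → (0,…,0) along positive reals if and only if f(z₁,…,zₙ) → x as (z₁,…,zₙ) → (0,…,0) with (z₁,…,zₙ) ∈ Σ_{β₁} × … × Σ_{βₙ}. -/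
open MeasureTheory Set Filter

noncomputable section

variable {X : Type*} [NormedAddCommGroup X] [NormedSpace ℂ X]

/-- The open sector `Σ_α = {z ∈ ℂ ∖ {0} : |arg z| < α}`. -/
def sector (α : ℝ) : Set ℂ := {z : ℂ | z ≠ 0 ∧ |Complex.arg z| < α}

/-
It suffices to replace the real variables by sectorial ones one coordinate at a time,
uniformly in the others. For one variable, let `h` be holomorphic and bounded by `C` on a closed
sector `|arg z| ≤ β'` and bounded by `ε` on `(0, δ)`. After multiplying by a weight that is `≤ 1`
on the sector, `≤ ε / C` on `[δ, ∞)` and close to `1` near `0`, the function is bounded by `ε` on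
the whole positive axis, and Hadamard's three lines theorem (transported to the sector by
`w ↦ exp (i w)`) bounds it by `ε ^ (1 - θ) * C ^ θ` on `|arg z| ≤ θ β'`. For `θ = β / β' < 1`
this tends to `0` with `ε`.
-/

open Complex Real Topology

theorem sector_mono {α α' : ℝ} (h : α ≤ α') : sector α ⊆ sector α' :=
  fun _ hz => ⟨hz.1, hz.2.trans_le h⟩

theorem ofReal_mem_sector {α t : ℝ} (hα : 0 < α) (ht : 0 < t) : (t : ℂ) ∈ sector α :=
  ⟨ofReal_ne_zero.2 ht.ne', by rwa [arg_ofReal_of_nonneg ht.le, abs_zero]⟩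

theorem mem_slitPlane_of_abs_arg_lt {z : ℂ} (hz : z ≠ 0) (harg : |z.arg| < π) :
    z ∈ slitPlane :=
  mem_slitPlane_iff_arg.2 ⟨fun h => by rw [h, abs_of_pos pi_pos] at harg; exact harg.false, hz⟩

theorem isOpen_sector {α : ℝ} (hα : α ≤ π) : IsOpen (sector α) := by
  refine isOpen_iff_mem_nhds.2 fun z hz => ?_
  have harg : ContinuousAt (fun w => |arg w|) z :=
    (continuousAt_arg (mem_slitPlane_of_abs_arg_lt hz.1 (hz.2.trans_le hα))).abs
  filter_upwards [eventually_ne_nhds hz.1, harg.eventually_lt continuousAt_const hz.2]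
    with w hw₀ hw
  exact ⟨hw₀, hw⟩

theorem exists_pos_eq_ofReal_of_arg_eq_zero {z : ℂ} (hz : z ≠ 0) (harg : z.arg = 0) :
    ∃ t : ℝ, 0 < t ∧ z = t := by
  obtain ⟨hre, him⟩ := arg_eq_zero_iff.1 harg
  have hz' : z = (z.re : ℂ) := Complex.ext (by simp) (by simp [him])
  exact ⟨z.re, hre.lt_of_ne fun h => hz (by rw [hz', ← h, ofReal_zero]), hz'⟩

theorem rpow_one_sub_mul_rpow_le {a b s t : ℝ} (ha : 0 < a) (hab : a ≤ b) (hst : s ≤ t) :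
    a ^ (1 - s) * b ^ s ≤ a ^ (1 - t) * b ^ t := by
  have hb : 0 < b := ha.trans_le hab
  calc a ^ (1 - s) * b ^ s = a ^ (1 - t) * a ^ (t - s) * b ^ s := by
        rw [← Real.rpow_add ha]; ring_nf
    _ ≤ a ^ (1 - t) * b ^ (t - s) * b ^ s := by gcongr
    _ = a ^ (1 - t) * b ^ t := by rw [mul_assoc, ← Real.rpow_add hb]; ring_nf

def sqrtWeight (δ : ℝ) (N : ℕ) (z : ℂ) : ℂ := ((1 + (z / δ) ^ (2⁻¹ : ℂ)) ^ N)⁻¹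

theorem one_le_norm_one_add_cpow_inv_two (w : ℂ) : 1 ≤ ‖1 + w ^ (2⁻¹ : ℂ)‖ := by
  refine le_trans ?_ (re_le_norm _)
  rw [add_re, one_re, cpow_inv_two_re]
  linarith [Real.sqrt_nonneg ((‖w‖ + w.re) / 2)]

theorem norm_sqrtWeight_le_one (δ : ℝ) (N : ℕ) (z : ℂ) : ‖sqrtWeight δ N z‖ ≤ 1 := by
  rw [sqrtWeight, norm_inv, norm_pow]
  exact inv_le_one_of_one_le₀ (one_le_pow₀ (one_le_norm_one_add_cpow_inv_two _))

theorem norm_sqrtWeight_ofReal_le {δ t : ℝ} (hδ : 0 < δ) (ht : δ ≤ t) (N : ℕ) :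
    ‖sqrtWeight δ N t‖ ≤ (2 ^ N)⁻¹ := by
  have htδ : 1 ≤ t / δ := (one_le_div hδ).2 ht
  have htwo : 2 ≤ ‖1 + ((t : ℂ) / δ) ^ (2⁻¹ : ℂ)‖ := by
    refine le_trans ?_ (re_le_norm _)
    rw [add_re, one_re, cpow_inv_two_re, ← ofReal_div, norm_real, ofReal_re,
      Real.norm_of_nonneg (by positivity), add_self_div_two]
    linarith [Real.one_le_sqrt.2 htδ]
  rw [sqrtWeight, norm_inv, norm_pow]
  exact inv_anti₀ (by positivity) (pow_le_pow_left₀ zero_le_two htwo N)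

theorem differentiableAt_sqrtWeight {δ : ℝ} (hδ : 0 < δ) (N : ℕ) {z : ℂ}
    (hz : z ∈ slitPlane) : DifferentiableAt ℂ (sqrtWeight δ N) z := by
  have hzδ : z / δ ∈ slitPlane := by
    rw [mem_slitPlane_iff, div_ofReal_re, div_ofReal_im] at *
    exact hz.imp (fun h => div_pos h hδ) (fun h => div_ne_zero h hδ.ne')
  refine ((((differentiableAt_id.div_const _).cpow_const hzδ).const_add 1).pow N).inv ?_
  exact pow_ne_zero _ (norm_pos_iff.1 (one_pos.trans_le (one_le_norm_one_add_cpow_inv_two _)))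

theorem exists_forall_half_le_norm_sqrtWeight (δ : ℝ) (N : ℕ) :
    ∃ δ' > 0, ∀ z : ℂ, ‖z‖ < δ' → 1 / 2 ≤ ‖sqrtWeight δ N z‖ := by
  have hsqrt : ContinuousAt (fun z : ℂ => (z / δ) ^ (2⁻¹ : ℂ)) 0 :=
    (continuousAt_cpow_const_of_re_pos (z := 0) (Or.inl le_rfl) (by norm_num)).comp_of_eq
      (continuousAt_id.div_const _) (by simp)
  have hcont : ContinuousAt (sqrtWeight δ N) 0 := (hsqrt.const_add 1).pow N |>.inv₀ (by simp)
  have hlt : 1 / 2 < ‖sqrtWeight δ N 0‖ := by norm_num [sqrtWeight]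
  obtain ⟨δ', hδ', h⟩ := Metric.eventually_nhds_iff.1 (hcont.norm.eventually (lt_mem_nhds hlt))
  exact ⟨δ', hδ', fun z hz => (h (by rwa [dist_zero_right])).le⟩

section OneVariable

variable {E : Type*} [NormedAddCommGroup E] [NormedSpace ℂ E]

open Complex.HadamardThreeLines in
theorem norm_le_rpow_mul_rpow_of_arg_mem_Icc {K : ℂ → E} {l u a b : ℝ} (hl : -π < l)
    (hlu : l < u) (hu : u ≤ π)
    (hd : ∀ z : ℂ, z ≠ 0 → z.arg ∈ Icc l u → DifferentiableAt ℂ K z)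
    (hB : ∃ C, ∀ z : ℂ, z ≠ 0 → z.arg ∈ Icc l u → ‖K z‖ ≤ C)
    (ha : ∀ z : ℂ, z ≠ 0 → z.arg = l → ‖K z‖ ≤ a)
    (hb : ∀ z : ℂ, z ≠ 0 → z.arg = u → ‖K z‖ ≤ b) {z : ℂ} (hz : z ≠ 0)
    (hzarg : z.arg ∈ Icc l u) :
    ‖K z‖ ≤ a ^ (1 - (z.arg - l) / (u - l)) * b ^ ((z.arg - l) / (u - l)) := by
  have harg : ∀ w : ℂ, w.re ∈ Icc l u → (exp (I * w)).arg = w.re := fun w hw => by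
    rw [arg_exp, (toIocMod_eq_self _).2] <;>
      simp only [mul_im, I_re, I_im, zero_mul, one_mul, zero_add]
    constructor <;> linarith [hw.1, hw.2]
  have hzw : (-I * log z).re = z.arg := by simp [log_im]
  have key := norm_le_interp_of_mem_verticalClosedStrip' (f := fun w => K (exp (I * w)))
    (a := a) (b := b) hlu (z := -I * log z)
    (by rw [verticalClosedStrip, mem_preimage, hzw]; exact hzarg) ?_ ?_
    (fun w hw => ha _ (exp_ne_zero _) (by rw [harg w (by rw [hw]; exact ⟨le_rfl, hlu.le⟩), hw]))
    (fun w hw => hb _ (exp_ne_zero _) (by rw [harg w (by rw [hw]; exact ⟨hlu.le, le_rfl⟩), hw]))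
  · rwa [← mul_assoc, mul_neg, I_mul_I, neg_neg, one_mul, exp_log hz, hzw] at key
  · refine DifferentiableOn.diffContOnCl fun w hw => ?_
    rw [verticalStrip, closure_preimage_re, closure_Ioo hlu.ne] at hw
    have hexp : DifferentiableAt ℂ (fun w => exp (I * w)) w := by fun_prop
    exact ((hd (exp (I * w)) (exp_ne_zero _) (by rw [harg w hw]; exact hw)).comp w
      hexp).differentiableWithinAt
  · obtain ⟨C, hC⟩ := hB
    exact ⟨C, by rintro _ ⟨w, hw, rfl⟩; exact hC _ (exp_ne_zero _) (by rw [harg w hw]; exact hw)⟩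

theorem norm_le_rpow_mul_rpow_of_abs_arg_le {K : ℂ → E} {β' ε C : ℝ} (hβ' : 0 < β')
    (hβ'π : β' < π) (hd : ∀ z : ℂ, z ≠ 0 → |z.arg| ≤ β' → DifferentiableAt ℂ K z)
    (hC : ∀ z : ℂ, z ≠ 0 → |z.arg| ≤ β' → ‖K z‖ ≤ C) (hε : ∀ t : ℝ, 0 < t → ‖K t‖ ≤ ε)
    {z : ℂ} (hz : z ≠ 0) (hzβ' : |z.arg| ≤ β') :
    ‖K z‖ ≤ ε ^ (1 - |z.arg| / β') * C ^ (|z.arg| / β') := by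
  have hmem : ∀ {l u : ℝ}, -β' ≤ l → u ≤ β' → ∀ w : ℂ, w.arg ∈ Icc l u → |w.arg| ≤ β' :=
    fun hl hu w hw => abs_le.2 ⟨hl.trans hw.1, hw.2.trans hu⟩
  have hray : ∀ w : ℂ, w ≠ 0 → w.arg = 0 → ‖K w‖ ≤ ε := fun w hw harg => by
    obtain ⟨t, ht, rfl⟩ := exists_pos_eq_ofReal_of_arg_eq_zero hw harg
    exact hε t ht
  have hπ : -π < -β' := neg_lt_neg hβ'π
  rcases le_total 0 z.arg with hpos | hneg
  · have := norm_le_rpow_mul_rpow_of_arg_mem_Icc (K := K) (hπ.trans (neg_lt_zero.2 hβ')) hβ'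
      hβ'π.le (fun w hw hwarg => hd w hw (hmem (neg_nonpos.2 hβ'.le) le_rfl w hwarg))
      ⟨C, fun w hw hwarg => hC w hw (hmem (neg_nonpos.2 hβ'.le) le_rfl w hwarg)⟩ hray
      (fun w hw hwarg => hC w hw (by rw [hwarg, abs_of_pos hβ'])) hz
      ⟨hpos, (le_abs_self _).trans hzβ'⟩
    rwa [sub_zero, sub_zero, ← abs_of_nonneg hpos] at this
  · have := norm_le_rpow_mul_rpow_of_arg_mem_Icc (K := K) hπ (neg_lt_zero.2 hβ') pi_pos.le
      (fun w hw hwarg => hd w hw (hmem le_rfl hβ'.le w hwarg))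
      ⟨C, fun w hw hwarg => hC w hw (hmem le_rfl hβ'.le w hwarg)⟩
      (fun w hw hwarg => hC w hw (by rw [hwarg, abs_neg, abs_of_pos hβ'])) hray hz
      ⟨(abs_le.1 hzβ').1, hneg⟩
    have hexp : (z.arg - -β') / (0 - -β') = 1 - |z.arg| / β' := by
      rw [abs_of_nonpos hneg, zero_sub, neg_neg, sub_neg_eq_add, add_div, div_self hβ'.ne',
        neg_div]
      ring
    rwa [hexp, sub_sub_cancel, mul_comm] at this

theorem norm_sqrtWeight_mul_norm_le {h : ℂ → E} {β' δ ε C : ℝ} {N : ℕ} (hβ' : 0 < β')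
    (hβ'π : β' < π) (hδ : 0 < δ) (hN : C ≤ 2 ^ N * ε)
    (hd : ∀ z : ℂ, z ≠ 0 → |z.arg| ≤ β' → DifferentiableAt ℂ h z)
    (hC : ∀ z : ℂ, z ≠ 0 → |z.arg| ≤ β' → ‖h z‖ ≤ C)
    (hsmall : ∀ t : ℝ, 0 < t → t < δ → ‖h t‖ ≤ ε) {z : ℂ} (hz : z ≠ 0) (hzβ' : |z.arg| ≤ β') :
    ‖sqrtWeight δ N z‖ * ‖h z‖ ≤ ε ^ (1 - |z.arg| / β') * C ^ (|z.arg| / β') := by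
  have hKC : ∀ z : ℂ, z ≠ 0 → |z.arg| ≤ β' → ‖sqrtWeight δ N z • h z‖ ≤ C :=
    fun z hz hzβ' => by
      rw [norm_smul]
      exact (mul_le_of_le_one_left (norm_nonneg _) (norm_sqrtWeight_le_one δ N z)).trans
        (hC z hz hzβ')
  have hKε : ∀ t : ℝ, 0 < t → ‖sqrtWeight δ N t • h t‖ ≤ ε := fun t ht => by
    rw [norm_smul]
    rcases lt_or_ge t δ with htδ | htδ
    · exact (mul_le_of_le_one_left (norm_nonneg _) (norm_sqrtWeight_le_one δ N t)).trans
        (hsmall t ht htδ)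
    · have hCt := hC t (ofReal_ne_zero.2 ht.ne')
        (by simpa [arg_ofReal_of_nonneg ht.le] using hβ'.le)
      calc ‖sqrtWeight δ N t‖ * ‖h t‖ ≤ (2 ^ N)⁻¹ * C :=
            mul_le_mul (norm_sqrtWeight_ofReal_le hδ htδ N) hCt (norm_nonneg _) (by positivity)
        _ ≤ ε := by rw [inv_mul_le_iff₀ (by positivity)]; exact hN
  rw [← norm_smul]
  refine norm_le_rpow_mul_rpow_of_abs_arg_le hβ' hβ'π (fun w hw hwβ' => ?_) hKC hKε hz hzβ'
  exact (differentiableAt_sqrtWeight hδ N (mem_slitPlane_of_abs_arg_lt hw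
    (hwβ'.trans_lt hβ'π))).smul (hd w hw hwβ')

theorem exists_forall_norm_lt_of_norm_ofReal_lt {β γ : ℝ} (hβ : 0 < β) (hβγ : β < γ)
    (hγ : γ ≤ π) (C : ℝ) {η : ℝ} (hη : 0 < η) :
    ∃ ε > 0, ∀ δ > 0, ∃ δ' > 0, ∀ h : ℂ → E, DifferentiableOn ℂ h (sector γ) →
      (∀ z ∈ sector γ, ‖h z‖ ≤ C) → (∀ t : ℝ, 0 < t → t < δ → ‖h t‖ < ε) →
      ∀ z ∈ sector β, ‖z‖ < δ' → ‖h z‖ < η := by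
  obtain ⟨β', hββ', hβ'γ⟩ := exists_between hβγ
  have hβ' : 0 < β' := hβ.trans hββ'
  set θ := β / β'
  have hθ : θ < 1 := (div_lt_one hβ').2 hββ'
  set C' := max C 1
  have hC' : 0 < C' := one_pos.trans_le (le_max_right _ _)
  have hlim : Tendsto (fun ε : ℝ => 2 * (ε ^ (1 - θ) * C' ^ θ)) (𝓝 0) (𝓝 0) := by
    have := (((Real.continuousAt_rpow_const 0 (1 - θ) (Or.inr (by linarith))).tendsto).mul_const
      (C' ^ θ)).const_mul 2
    rwa [Real.zero_rpow (by linarith), zero_mul, mul_zero] at this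
  obtain ⟨ε, ⟨hεη, hεC⟩, hε⟩ := (((hlim.eventually (gt_mem_nhds hη)).and
    (eventually_le_nhds hC')).filter_mono nhdsWithin_le_nhds |>.and
    (self_mem_nhdsWithin (s := Ioi 0))).exists
  refine ⟨ε, hε, fun δ hδ => ?_⟩
  obtain ⟨N, hN⟩ := pow_unbounded_of_one_lt (C' / ε) one_lt_two
  obtain ⟨δ', hδ', hweight⟩ := exists_forall_half_le_norm_sqrtWeight δ N
  refine ⟨δ', hδ', fun h hd hC hsmall z hz hzδ' => ?_⟩
  have hsub : ∀ w : ℂ, w ≠ 0 → |w.arg| ≤ β' → w ∈ sector γ :=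
    fun w hw hwβ' => ⟨hw, hwβ'.trans_lt hβ'γ⟩
  have key := norm_sqrtWeight_mul_norm_le (h := h) (N := N) (C := C') hβ' (hβ'γ.trans_le hγ) hδ
    ((div_le_iff₀ hε).1 hN.le)
    (fun w hw hwβ' => hd.differentiableAt ((isOpen_sector hγ).mem_nhds (hsub w hw hwβ')))
    (fun w hw hwβ' => (hC w (hsub w hw hwβ')).trans (le_max_left _ _))
    (fun t ht htδ => (hsmall t ht htδ).le) hz.1 (hz.2.le.trans hββ'.le)
  calc ‖h z‖ ≤ 2 * (‖sqrtWeight δ N z‖ * ‖h z‖) := by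
        nlinarith [hweight z hzδ', norm_nonneg (h z)]
    _ ≤ 2 * (ε ^ (1 - |z.arg| / β') * C' ^ (|z.arg| / β')) := by gcongr
    _ ≤ 2 * (ε ^ (1 - θ) * C' ^ θ) := by
        gcongr 2 * ?_
        exact rpow_one_sub_mul_rpow_le hε hεC (div_le_div_of_nonneg_right hz.2.le hβ'.le)
    _ < η := hεη

end OneVariable

section SeveralVariables

open Function

variable {ι : Type*} [DecidableEq ι]

def sectorPi (β : ι → ℝ) (s : Finset ι) : Set (ι → ℂ) :=
  univ.pi fun j => if j ∈ s then sector (β j) else ofReal '' Ioi 0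

theorem sectorPi_subset_pi_sector {β γ : ι → ℝ} (hβγ : ∀ j, β j ≤ γ j) (hγ : ∀ j, 0 < γ j)
    (s : Finset ι) : sectorPi β s ⊆ univ.pi fun j => sector (γ j) := fun z hz j _ => by
  have hzj : z j ∈ if j ∈ s then sector (β j) else ofReal '' Ioi 0 := hz j trivial
  split_ifs at hzj
  · exact sector_mono (hβγ j) hzj
  · obtain ⟨t, ht, htz⟩ := hzj
    exact htz ▸ ofReal_mem_sector (hγ j) ht

theorem sectorPi_univ [Fintype ι] (β : ι → ℝ) :
    sectorPi β Finset.univ = univ.pi fun j => sector (β j) := by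
  simp [sectorPi]

theorem update_mem_sectorPi {β : ι → ℝ} {s : Finset ι} {j₀ : ι} (hj₀ : j₀ ∉ s) {z : ι → ℂ}
    (hz : z ∈ sectorPi β (insert j₀ s)) {t : ℝ} (ht : 0 < t) :
    update z j₀ (t : ℂ) ∈ sectorPi β s := by
  refine update_mem_pi_iff.2 ⟨fun j hj => ?_, fun _ => ?_⟩
  · have hne : j ≠ j₀ := hj.2
    simpa only [Finset.mem_insert, hne, false_or] using hz j trivial
  · simpa only [hj₀, if_false] using mem_image_of_mem _ (mem_Ioi.2 ht)

variable {E : Type*} [NormedAddCommGroup E]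

theorem tendsto_nhdsWithin_sectorPi_empty_iff [Fintype ι] {f : (ι → ℂ) → E} {β : ι → ℝ}
    {x : E} :
    Tendsto f (𝓝[sectorPi β ∅] 0) (𝓝 x) ↔
      ∀ ε > 0, ∃ δ > 0, ∀ t : ι → ℝ, (∀ j, 0 < t j ∧ t j < δ) →
        ‖f (fun j => (t j : ℂ)) - x‖ < ε := by
  simp only [Metric.tendsto_nhdsWithin_nhds, dist_eq_norm, sub_zero]
  refine forall₂_congr fun ε _ => exists_congr fun δ => and_congr_right fun hδ =>
    ⟨fun h t ht => ?_, fun h z hz hzδ => ?_⟩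
  · refine h (fun j _ => ?_) ((pi_norm_lt_iff hδ).2 fun j => ?_)
    · simpa using mem_image_of_mem ofReal (mem_Ioi.2 (ht j).1)
    · rw [norm_real, Real.norm_of_nonneg (ht j).1.le]; exact (ht j).2
  · have hz' : ∀ j, ∃ t : ℝ, 0 < t ∧ (t : ℂ) = z j := fun j => by simpa using hz j trivial
    choose t ht htz using hz'
    obtain rfl : (fun j => (t j : ℂ)) = z := funext htz
    refine h t fun j => ⟨ht j, ?_⟩
    have := (pi_norm_lt_iff hδ).1 hzδ j
    rwa [norm_real, Real.norm_of_nonneg (ht j).le] at this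

theorem tendsto_nhdsWithin_sectorPi_univ_iff [Fintype ι] {f : (ι → ℂ) → E} {β : ι → ℝ}
    {x : E} :
    Tendsto f (𝓝[sectorPi β Finset.univ] 0) (𝓝 x) ↔
      ∀ ε > 0, ∃ δ > 0, ∀ z : ι → ℂ, (∀ j, z j ∈ sector (β j) ∧ ‖z j‖ < δ) →
        ‖f z - x‖ < ε := by
  simp only [Metric.tendsto_nhdsWithin_nhds, dist_eq_norm, sub_zero, sectorPi_univ, mem_univ_pi]
  refine forall₂_congr fun ε _ => exists_congr fun δ => and_congr_right fun hδ =>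
    ⟨fun h z hz => ?_, fun h z hz hzδ => ?_⟩
  · exact h (fun j => (hz j).1) ((pi_norm_lt_iff hδ).2 fun j => (hz j).2)
  · exact h z fun j => ⟨hz j, (pi_norm_lt_iff hδ).1 hzδ j⟩

variable [NormedSpace ℂ E]

theorem tendsto_nhdsWithin_sectorPi_insert [Fintype ι] {f : (ι → ℂ) → E} {β γ : ι → ℝ}
    {C : ℝ} {x : E} (hβ : ∀ j, 0 < β j) (hβγ : ∀ j, β j < γ j) (hγ : ∀ j, γ j ≤ π)
    (hf : DifferentiableOn ℂ f (univ.pi fun j => sector (γ j)))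
    (hC : ∀ z ∈ univ.pi (fun j => sector (γ j)), ‖f z‖ ≤ C)
    {s : Finset ι} {j₀ : ι} (hj₀ : j₀ ∉ s) (hs : Tendsto f (𝓝[sectorPi β s] 0) (𝓝 x)) :
    Tendsto f (𝓝[sectorPi β (insert j₀ s)] 0) (𝓝 x) := by
  rw [Metric.tendsto_nhdsWithin_nhds] at hs ⊢
  intro η hη
  obtain ⟨ε, hε, hsmall⟩ :=
    exists_forall_norm_lt_of_norm_ofReal_lt (E := E) (hβ j₀) (hβγ j₀) (hγ j₀) (C + ‖x‖) hη
  obtain ⟨δ, hδ, hfδ⟩ := hs ε hε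
  obtain ⟨δ', hδ', hbound⟩ := hsmall δ hδ
  refine ⟨min δ δ', lt_min hδ hδ', fun {z} hz hzδ => ?_⟩
  rw [dist_zero_right, pi_norm_lt_iff (lt_min hδ hδ')] at hzδ
  have hU : z ∈ univ.pi fun j => sector (γ j) :=
    sectorPi_subset_pi_sector (fun j => (hβγ j).le) (fun j => (hβ j).trans (hβγ j)) _ hz
  have hupd : ∀ w ∈ sector (γ j₀), update z j₀ w ∈ univ.pi fun j => sector (γ j) :=
    fun w hw => (update_mem_pi_iff_of_mem hU).2 fun _ => hw
  have hopen : IsOpen (univ.pi fun j => sector (γ j)) :=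
    isOpen_set_pi finite_univ fun j _ => isOpen_sector (hγ j)
  have hreal : ∀ t : ℝ, 0 < t → t < δ → ‖f (update z j₀ (t : ℂ)) - x‖ < ε := fun t ht htδ => by
    have hnorm : dist (update z j₀ (t : ℂ)) 0 < δ := by
      rw [dist_zero_right, pi_norm_lt_iff hδ]
      intro j
      rcases eq_or_ne j j₀ with rfl | hne
      · rwa [update_self, norm_real, Real.norm_of_nonneg ht.le]
      · rw [update_of_ne hne]
        exact (hzδ j).trans_le (min_le_left _ _)
    simpa [dist_eq_norm] using hfδ (update_mem_sectorPi hj₀ hz ht) hnorm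
  have key := hbound (fun w => f (update z j₀ w) - x)
    (fun w hw => ((hf.differentiableAt (hopen.mem_nhds (hupd w hw))).comp w
      (hasFDerivAt_update z w).differentiableAt).sub_const x |>.differentiableWithinAt)
    (fun w hw => (norm_sub_le _ _).trans (add_le_add_left (hC _ (hupd w hw)) _)) hreal
    (z j₀) (by simpa using hz j₀ trivial) ((hzδ j₀).trans_le (min_le_right _ _))
  simpa [dist_eq_norm] using key

theorem tendsto_nhdsWithin_sectorPi_univ [Fintype ι] {f : (ι → ℂ) → E} {β γ : ι → ℝ}
    {C : ℝ} {x : E} (hβ : ∀ j, 0 < β j) (hβγ : ∀ j, β j < γ j) (hγ : ∀ j, γ j ≤ π)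
    (hf : DifferentiableOn ℂ f (univ.pi fun j => sector (γ j)))
    (hC : ∀ z ∈ univ.pi (fun j => sector (γ j)), ‖f z‖ ≤ C)
    (h₀ : Tendsto f (𝓝[sectorPi β ∅] 0) (𝓝 x)) :
    Tendsto f (𝓝[sectorPi β Finset.univ] 0) (𝓝 x) :=
  Finset.induction_on Finset.univ h₀ fun _ _ hj₀ hs =>
    tendsto_nhdsWithin_sectorPi_insert hβ hβγ hγ hf hC hj₀ hs

end SeveralVariables

theorem sectorial_limit_at_zero_general
    (n : ℕ) (α : Fin n → ℝ) (hα : ∀ j, 0 < α j ∧ α j ≤ Real.pi)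
    (f : (Fin n → ℂ) → X)
    (hf : DifferentiableOn ℂ f {z : Fin n → ℂ | ∀ j, z j ∈ sector (α j)})
    (hbd : ∀ β : Fin n → ℝ, (∀ j, β j ∈ Set.Ioo 0 (α j)) →
      ∃ C, ∀ z : Fin n → ℂ, (∀ j, z j ∈ sector (β j)) → ‖f z‖ ≤ C)
    (β : Fin n → ℝ) (hβ : ∀ j, β j ∈ Set.Ioo 0 (α j)) (x : X) :
    (∀ ε > 0, ∃ δ > 0, ∀ t : Fin n → ℝ, (∀ j, 0 < t j ∧ t j < δ) →
        ‖f (fun j => (t j : ℂ)) - x‖ < ε) ↔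
    (∀ ε > 0, ∃ δ > 0, ∀ z : Fin n → ℂ,
        (∀ j, z j ∈ sector (β j) ∧ ‖z j‖ < δ) → ‖f z - x‖ < ε) := by
  rw [← tendsto_nhdsWithin_sectorPi_empty_iff, ← tendsto_nhdsWithin_sectorPi_univ_iff]
  refine ⟨fun h₀ => ?_, fun h => h.mono_left (nhdsWithin_mono _ ?_)⟩
  · choose γ hβγ hγα using fun j => exists_between (hβ j).2
    obtain ⟨C, hC⟩ := hbd γ fun j => ⟨(hβ j).1.trans (hβγ j), hγα j⟩
    exact tendsto_nhdsWithin_sectorPi_univ (fun j => (hβ j).1) hβγ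
      (fun j => (hγα j).le.trans (hα j).2)
      (hf.mono fun z hz j => sector_mono (hγα j).le (hz j trivial))
      (fun z hz => hC z fun j => hz j trivial) h₀
  · rw [sectorPi_univ]
    exact sectorPi_subset_pi_sector (fun _ => le_rfl) (fun j => (hβ j).1) ∅

/-- For a holomorphic `f` on a product of sectors, bounded on every smaller product of
sectors, `f(t) → x` along positive reals `t → 0` iff `f(z) → x` as `z → 0` with
`z ∈ Σ_{β₁} × … × Σ_{βₙ}`. -/
theorem sectorial_limit_at_zero [CompleteSpace X]
    (n : ℕ) (hn : 1 ≤ n) (α : Fin n → ℝ) (hα : ∀ j, 0 < α j ∧ α j ≤ Real.pi)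
    (f : (Fin n → ℂ) → X)
    (hf : DifferentiableOn ℂ f {z : Fin n → ℂ | ∀ j, z j ∈ sector (α j)})
    (hbd : ∀ β : Fin n → ℝ, (∀ j, β j ∈ Set.Ioo 0 (α j)) →
      ∃ C, ∀ z : Fin n → ℂ, (∀ j, z j ∈ sector (β j)) → ‖f z‖ ≤ C)
    (β : Fin n → ℝ) (hβ : ∀ j, β j ∈ Set.Ioo 0 (α j)) (x : X) :
    (∀ ε > 0, ∃ δ > 0, ∀ t : Fin n → ℝ, (∀ j, 0 < t j ∧ t j < δ) →
        ‖f (fun j => (t j : ℂ)) - x‖ < ε) ↔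
    (∀ ε > 0, ∃ δ > 0, ∀ z : Fin n → ℂ,
        (∀ j, z j ∈ sector (β j) ∧ ‖z j‖ < δ) → ‖f z - x‖ < ε) :=
  sectorial_limit_at_zero_general n α hα f hf hbd β hβ x
end
end
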